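/- For every r₀ > 0 and n ∈ ℕ there exists a constant C > 0 such that for every λ ≥ max(2, 2/r₀) and every continuously differentiable map w : ℝ² → ℝⁿ, the average of w over the boundary circle of 𝔻_{r₀} satisfies |(1/2π)∫₀^{2π} w(r₀ cos θ, r₀ sin θ) dθ| ≤ C (log λ)^{1/2} ( ∫_{𝔻_{r₀}} |Dw(x)|² + ρ_λ(x)² |w(x)|² dx )^{1/2}. -/

import Mathlib

open MeasureTheory Real

noncomputable section

abbrev E2 := EuclideanSpace ℝ (Fin 2)

/-- The weight `ρ_λ(x) = λ/(1+λ²|x|²)`. -/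
def rho (l : ℝ) (x : E2) : ℝ := l / (1 + l ^ 2 * ‖x‖ ^ 2)

/-- Square of the Hilbert–Schmidt (Frobenius) norm of the total derivative:
`|Dw(x)|² = Σᵢ |∂ᵢ w(x)|²`. -/
def hsNormSq {n : ℕ} (w : E2 → EuclideanSpace ℝ (Fin n)) (x : E2) : ℝ :=
  ∑ i : Fin 2, ‖fderiv ℝ w x (EuclideanSpace.single i 1)‖ ^ 2

/-- The circle average `(2π)⁻¹ ∫₀^{2π} w(ρ cos θ, ρ sin θ) dθ`. -/
def circAvg {n : ℕ} (w : E2 → EuclideanSpace ℝ (Fin n)) (ρ : ℝ) : EuclideanSpace ℝ (Fin n) :=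
  (2 * π)⁻¹ • ∫ θ in (0 : ℝ)..(2 * π),
    w ((WithLp.equiv 2 (Fin 2 → ℝ)).symm ![ρ * Real.cos θ, ρ * Real.sin θ])

/-!
Along the ray of angle `θ`, the fundamental theorem of calculus bounds `|w(r₀, θ)|` by the mean of
`|w|` over `r ∈ [1/λ, 2/λ]` plus `∫_{1/λ}^{r₀} |∂_r w| dr`, and `λ ≤ 5 ρ_λ` on that range turns the
mean into `∫ 5 ρ_λ |w| dr`. Integrating in `θ` bounds the circle average by the integral of
`G = 5 ρ_λ |w| + |∂_r w|` over the polar rectangle `(1/λ, r₀) × (-π, π)`. Cauchy–Schwarz against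
the area element `r dr dθ` costs `(∫∫ dr dθ / r)^{1/2} = (2π log (λ r₀))^{1/2}`, while
`G² ≤ 50 (|Dw|² + ρ_λ² |w|²)`; finally `log (λ r₀) ≤ C log λ` for `λ ≥ 2`.
-/

open Set

def unitVec (θ : ℝ) : E2 := (WithLp.equiv 2 (Fin 2 → ℝ)).symm ![cos θ, sin θ]

lemma smul_unitVec (r θ : ℝ) :
    r • unitVec θ = (WithLp.equiv 2 (Fin 2 → ℝ)).symm ![r * cos θ, r * sin θ] := by
  ext i
  fin_cases i <;> simp [unitVec]

lemma norm_unitVec (θ : ℝ) : ‖unitVec θ‖ = 1 := by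
  simp [unitVec, EuclideanSpace.norm_eq, Fin.sum_univ_two, cos_sq_add_sin_sq]

lemma norm_smul_unitVec (r θ : ℝ) : ‖r • unitVec θ‖ = |r| := by
  rw [norm_smul, norm_unitVec, mul_one, Real.norm_eq_abs]

@[fun_prop]
lemma continuous_unitVec : Continuous unitVec := by
  refine (PiLp.continuous_toLp 2 _).comp (continuous_pi fun i => ?_)
  fin_cases i <;>
    simp only [Fin.zero_eta, Fin.mk_one, Matrix.cons_val_zero, Matrix.cons_val_one] <;> fun_prop

lemma unitVec_periodic : Function.Periodic unitVec (2 * π) := by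
  intro θ
  simp [unitVec]

lemma norm_apply_sq_le_sum_apply_single {ι V : Type*} [Fintype ι] [DecidableEq ι]
    [NormedAddCommGroup V] [NormedSpace ℝ V]
    (T : EuclideanSpace ℝ ι →L[ℝ] V) (v : EuclideanSpace ℝ ι) :
    ‖T v‖ ^ 2 ≤ ‖v‖ ^ 2 * ∑ i, ‖T (EuclideanSpace.single i 1)‖ ^ 2 := by
  have hv : T v = ∑ i, v i • T (EuclideanSpace.single i 1) := by
    conv_lhs => rw [← (EuclideanSpace.basisFun ι ℝ).sum_repr v]
    simp
  calc ‖T v‖ ^ 2 ≤ (∑ i, ‖v i‖ * ‖T (EuclideanSpace.single i 1)‖) ^ 2 := by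
        gcongr
        rw [hv]
        exact (norm_sum_le _ _).trans_eq (by simp only [norm_smul])
    _ ≤ (∑ i, ‖v i‖ ^ 2) * ∑ i, ‖T (EuclideanSpace.single i 1)‖ ^ 2 :=
        Finset.sum_mul_sq_le_sq_mul_sq _ _ _
    _ = ‖v‖ ^ 2 * ∑ i, ‖T (EuclideanSpace.single i 1)‖ ^ 2 := by
        rw [EuclideanSpace.norm_sq_eq]

lemma hasDerivAt_comp_smul {E F : Type*} [NormedAddCommGroup E] [NormedSpace ℝ E]
    [NormedAddCommGroup F] [NormedSpace ℝ F] {f : E → F} (v : E) {r : ℝ}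
    (hf : DifferentiableAt ℝ f (r • v)) :
    HasDerivAt (fun s : ℝ => f (s • v)) (fderiv ℝ f (r • v) v) r := by
  have hline : HasDerivAt (fun s : ℝ => s • v) v r := by
    simpa using (hasDerivAt_id r).smul_const v
  exact hf.hasFDerivAt.comp_hasDerivAt r hline

def planeEquiv : (ℝ × ℝ) ≃ᵐ E2 :=
  MeasurableEquiv.finTwoArrow.symm.trans (MeasurableEquiv.toLp 2 (Fin 2 → ℝ))

lemma measurePreserving_planeEquiv : MeasurePreserving planeEquiv volume volume :=
  (EuclideanSpace.volume_preserving_symm_measurableEquiv_toLp (Fin 2)).symm.comp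
    (volume_preserving_finTwoArrow ℝ).symm

lemma planeEquiv_polarCoord_symm (p : ℝ × ℝ) :
    planeEquiv (polarCoord.symm p) = p.1 • unitVec p.2 := by
  rw [smul_unitVec]
  rfl

theorem setIntegral_ball_eq_polar {F : Type*} [NormedAddCommGroup F] [NormedSpace ℝ F]
    (g : E2 → F) (R : ℝ) :
    ∫ x in Metric.ball (0 : E2) R, g x
      = ∫ p in Ioo 0 R ×ˢ Ioo (-π) π, p.1 • g (p.1 • unitVec p.2) := by
  have hball : ∀ p ∈ polarCoord.target,
      p.1 • (Metric.ball (0 : E2) R).indicator g (p.1 • unitVec p.2)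
        = (Iio R ×ˢ univ).indicator (fun p => p.1 • g (p.1 • unitVec p.2)) p := by
    rintro p ⟨hp, -⟩
    simp only [indicator, Metric.mem_ball, dist_zero_right, norm_smul_unitVec,
      abs_of_pos (mem_Ioi.1 hp), mem_prod, mem_Iio, mem_univ, and_true]
    split_ifs <;> simp
  have htarget : polarCoord.target ∩ (Iio R ×ˢ univ) = Ioo 0 R ×ˢ Ioo (-π) π := by
    ext p
    simp only [polarCoord_target, mem_inter_iff, mem_prod, mem_Ioi, mem_Ioo, mem_Iio, mem_univ]
    tauto
  rw [← integral_indicator measurableSet_ball,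
    ← measurePreserving_planeEquiv.integral_comp planeEquiv.measurableEmbedding,
    ← integral_comp_polarCoord_symm]
  simp only [planeEquiv_polarCoord_symm]
  rw [setIntegral_congr_fun polarCoord.open_target.measurableSet hball,
    setIntegral_indicator (measurableSet_Iio.prod MeasurableSet.univ), htarget]

theorem integral_mul_le_sqrt_mul_sqrt {α : Type*} [MeasurableSpace α] {μ : Measure α}
    {f g : α → ℝ} (hf0 : 0 ≤ᵐ[μ] f) (hg0 : 0 ≤ᵐ[μ] g) (hf : MemLp f 2 μ) (hg : MemLp g 2 μ) :
    ∫ a, f a * g a ∂μ ≤ √(∫ a, f a ^ 2 ∂μ) * √(∫ a, g a ^ 2 ∂μ) := by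
  have h := integral_mul_le_Lp_mul_Lq_of_nonneg Real.HolderConjugate.two_two hf0 hg0
    (by rwa [ENNReal.ofReal_ofNat]) (by rwa [ENNReal.ofReal_ofNat])
  simpa only [Real.rpow_two, Real.sqrt_eq_rpow, one_div] using h

lemma integrableOn_Ioo_prod_Ioo {E : Type*} [NormedAddCommGroup E] {f : ℝ × ℝ → E}
    {a b c d : ℝ} (hf : ContinuousOn f (Icc a b ×ˢ Icc c d)) :
    IntegrableOn f (Ioo a b ×ˢ Ioo c d) :=
  (hf.integrableOn_compact (isCompact_Icc.prod isCompact_Icc)).mono_set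
    (prod_mono Ioo_subset_Icc_self Ioo_subset_Icc_self)

theorem intervalIntegral_intervalIntegral_eq_setIntegral_prod {E : Type*}
    [NormedAddCommGroup E] [NormedSpace ℝ E] {f : ℝ × ℝ → E} (hf : Continuous f)
    {a b c d : ℝ} (hab : a ≤ b) (hcd : c ≤ d) :
    ∫ θ in c..d, ∫ r in a..b, f (r, θ) = ∫ p in Ioo a b ×ˢ Ioo c d, f p := by
  have hswap : IntegrableOn (fun q : ℝ × ℝ => f q.swap) (Ioo c d ×ˢ Ioo a b) :=
    integrableOn_Ioo_prod_Ioo (hf.comp continuous_swap).continuousOn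
  rw [Measure.volume_eq_prod, ← setIntegral_prod_swap, setIntegral_prod _ hswap,
    intervalIntegral.integral_of_le hcd, integral_Ioc_eq_integral_Ioo]
  refine setIntegral_congr_fun measurableSet_Ioo fun θ _ => ?_
  rw [intervalIntegral.integral_of_le hab, integral_Ioc_eq_integral_Ioo]
  rfl

lemma integrableOn_Ioo_prod_Ioo_inv_fst {a b c d : ℝ} (ha : 0 < a) :
    IntegrableOn (fun p : ℝ × ℝ => p.1⁻¹) (Ioo a b ×ˢ Ioo c d) :=
  integrableOn_Ioo_prod_Ioo fun _ hp =>
    (continuous_fst.continuousAt.inv₀ (ha.trans_le hp.1.1).ne').continuousWithinAt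

lemma setIntegral_Ioo_prod_Ioo_inv_fst {a b c d : ℝ} (ha : 0 < a) (hab : a ≤ b) (hcd : c ≤ d) :
    ∫ p in Ioo a b ×ˢ Ioo c d, p.1⁻¹ = (d - c) * log (b / a) := by
  have hzero : (0 : ℝ) ∉ uIcc a b := by
    rw [uIcc_of_le hab]
    exact fun h => (ha.trans_le h.1).false
  rw [Measure.volume_eq_prod, setIntegral_prod _ (integrableOn_Ioo_prod_Ioo_inv_fst ha)]
  simp only [setIntegral_const, Real.volume_real_Ioo_of_le hcd, smul_eq_mul]
  rw [integral_const_mul, ← integral_Ioc_eq_integral_Ioo, ← intervalIntegral.integral_of_le hab,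
    integral_inv hzero]

theorem setIntegral_Ioo_prod_Ioo_le_sqrt_mul_sqrt {h : ℝ × ℝ → ℝ} (hh : Continuous h)
    {a b c d : ℝ} (h0 : ∀ p ∈ Ioo a b ×ˢ Ioo c d, 0 ≤ h p) (ha : 0 < a) (hab : a ≤ b)
    (hcd : c ≤ d) :
    ∫ p in Ioo a b ×ˢ Ioo c d, h p ≤
      √((d - c) * log (b / a)) * √(∫ p in Ioo a b ×ˢ Ioo c d, p.1 * h p ^ 2) := by
  set S := Ioo a b ×ˢ Ioo c d
  have hS : MeasurableSet S := measurableSet_Ioo.prod measurableSet_Ioo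
  have hpos : ∀ p ∈ S, 0 < p.1 := fun p hp => ha.trans hp.1.1
  set f : ℝ × ℝ → ℝ := fun p => (√p.1)⁻¹
  set g : ℝ × ℝ → ℝ := fun p => √p.1 * h p
  have hfg : ∀ p ∈ S, f p * g p = h p := fun p hp => by
    simp only [f, g, ← mul_assoc, inv_mul_cancel₀ (Real.sqrt_pos.2 (hpos p hp)).ne', one_mul]
  have hf2 : ∀ p ∈ S, f p ^ 2 = p.1⁻¹ := fun p hp => by
    simp only [f, inv_pow, Real.sq_sqrt (hpos p hp).le]
  have hg2 : ∀ p ∈ S, g p ^ 2 = p.1 * h p ^ 2 := fun p hp => by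
    simp only [g, mul_pow, Real.sq_sqrt (hpos p hp).le]
  have hfm : AEStronglyMeasurable f (volume.restrict S) := by
    fun_prop
  have hf : MemLp f 2 (volume.restrict S) :=
    (memLp_two_iff_integrable_sq hfm).2 <|
      ((integrableOn_Ioo_prod_Ioo_inv_fst ha).congr_fun (fun p hp => (hf2 p hp).symm) hS)
  have hg : MemLp g 2 (volume.restrict S) :=
    (memLp_two_iff_integrable_sq (by fun_prop)).2 <|
      integrableOn_Ioo_prod_Ioo (by fun_prop : Continuous fun p => g p ^ 2).continuousOn
  have hcs := integral_mul_le_sqrt_mul_sqrt (ae_of_all _ fun p => by positivity)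
    ((ae_restrict_iff' hS).2 (ae_of_all _ fun p hp => mul_nonneg (Real.sqrt_nonneg _) (h0 p hp)))
    hf hg
  rwa [setIntegral_congr_fun hS hfg, setIntegral_congr_fun hS hf2, setIntegral_congr_fun hS hg2,
    setIntegral_Ioo_prod_Ioo_inv_fst ha hab hcd] at hcs

theorem norm_le_inv_mul_integral_norm_add_integral_norm_deriv {E : Type*}
    [NormedAddCommGroup E] [NormedSpace ℝ E] [CompleteSpace E] {f f' : ℝ → E}
    (hf : ∀ t, HasDerivAt f (f' t) t) (hf' : Continuous f') {a b R : ℝ} (hab : a < b)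
    (hbR : b ≤ R) :
    ‖f R‖ ≤ (b - a)⁻¹ * (∫ r in a..b, ‖f r‖) + ∫ s in a..R, ‖f' s‖ := by
  set D := ∫ s in a..R, ‖f' s‖
  have hfc : Continuous f := continuous_iff_continuousAt.2 fun t => (hf t).continuousAt
  have hpoint : ∀ r ∈ Icc a b, ‖f R‖ ≤ ‖f r‖ + D := by
    intro r hr
    have hftc : f R = f r + ∫ s in r..R, f' s := by
      rw [intervalIntegral.integral_eq_sub_of_hasDerivAt (fun t _ => hf t)
        (hf'.intervalIntegrable r R), add_sub_cancel]
    rw [hftc]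
    refine (norm_add_le _ _).trans (add_le_add_right ?_ _)
    refine (intervalIntegral.norm_integral_le_integral_norm (hr.2.trans hbR)).trans ?_
    exact intervalIntegral.integral_mono_interval hr.1 (hr.2.trans hbR) le_rfl
      (Filter.Eventually.of_forall fun s => norm_nonneg _) (hf'.norm.intervalIntegrable a R)
  have hint : (b - a) * ‖f R‖ ≤ (∫ r in a..b, ‖f r‖) + (b - a) * D := by
    have := intervalIntegral.integral_mono_on (g := fun r => ‖f r‖ + D) hab.le
      (intervalIntegrable_const (μ := volume))
      ((hfc.norm.add continuous_const).intervalIntegrable a b) hpoint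
    rwa [intervalIntegral.integral_const, intervalIntegral.integral_add
      (hfc.norm.intervalIntegrable a b) intervalIntegrable_const,
      intervalIntegral.integral_const, smul_eq_mul, smul_eq_mul] at this
  rw [← sub_le_iff_le_add, inv_mul_eq_div, le_div_iff₀' (sub_pos.2 hab), mul_sub]
  linarith

def energyDensity {n : ℕ} (l : ℝ) (w : E2 → EuclideanSpace ℝ (Fin n)) (x : E2) : ℝ :=
  hsNormSq w x + rho l x ^ 2 * ‖w x‖ ^ 2

/-- The factor `5` is chosen so that `λ ≤ 5 ρ_λ` on the disc of radius `2 / λ`. -/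
def radialControl {n : ℕ} (l : ℝ) (w : E2 → EuclideanSpace ℝ (Fin n)) (p : ℝ × ℝ) : ℝ :=
  5 * rho l (p.1 • unitVec p.2) * ‖w (p.1 • unitVec p.2)‖
    + ‖fderiv ℝ w (p.1 • unitVec p.2) (unitVec p.2)‖

lemma rho_nonneg {l : ℝ} (hl : 0 ≤ l) (x : E2) : 0 ≤ rho l x := by
  unfold rho
  positivity

lemma div_five_le_rho {l : ℝ} (hl : 0 < l) {x : E2} (hx : ‖x‖ ≤ 2 / l) : l / 5 ≤ rho l x := by
  have hlx : l * ‖x‖ ≤ 2 := by rwa [le_div_iff₀' hl] at hx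
  have hden : 1 + l ^ 2 * ‖x‖ ^ 2 ≤ 5 := by nlinarith [mul_nonneg hl.le (norm_nonneg x)]
  exact div_le_div_of_nonneg_left hl.le (by positivity) hden

@[fun_prop]
lemma continuous_rho (l : ℝ) : Continuous (rho l) :=
  continuous_const.div (by fun_prop) fun x => by positivity

section

variable {n : ℕ} {w : E2 → EuclideanSpace ℝ (Fin n)}

lemma hsNormSq_nonneg (x : E2) : 0 ≤ hsNormSq w x :=
  Finset.sum_nonneg fun _ _ => sq_nonneg _

lemma continuous_hsNormSq (hw : ContDiff ℝ 1 w) : Continuous (hsNormSq w) := by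
  have := hw.continuous_fderiv one_ne_zero
  unfold hsNormSq
  fun_prop

lemma energyDensity_nonneg (l : ℝ) (x : E2) : 0 ≤ energyDensity l w x :=
  add_nonneg (hsNormSq_nonneg x) (by positivity)

lemma continuous_energyDensity (hw : ContDiff ℝ 1 w) (l : ℝ) :
    Continuous (energyDensity l w) := by
  have := continuous_hsNormSq hw
  have := hw.continuous
  unfold energyDensity
  fun_prop

lemma radialControl_nonneg {l : ℝ} (hl : 0 ≤ l) (p : ℝ × ℝ) : 0 ≤ radialControl l w p :=
  add_nonneg (mul_nonneg (mul_nonneg (by norm_num) (rho_nonneg hl _)) (norm_nonneg _))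
    (norm_nonneg _)

lemma continuous_radialControl (hw : ContDiff ℝ 1 w) (l : ℝ) :
    Continuous (radialControl l w) := by
  have := hw.continuous_fderiv one_ne_zero
  have := hw.continuous
  unfold radialControl
  fun_prop

lemma radialControl_sq_le (l : ℝ) (p : ℝ × ℝ) :
    radialControl l w p ^ 2 ≤ 50 * energyDensity l w (p.1 • unitVec p.2) := by
  set x := p.1 • unitVec p.2
  have hDw : ‖fderiv ℝ w x (unitVec p.2)‖ ^ 2 ≤ hsNormSq w x := by
    have h := norm_apply_sq_le_sum_apply_single (fderiv ℝ w x) (unitVec p.2)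
    rw [norm_unitVec, one_pow, one_mul] at h
    exact h
  unfold radialControl energyDensity
  nlinarith [sq_nonneg (5 * rho l x * ‖w x‖ - ‖fderiv ℝ w x (unitVec p.2)‖)]

variable {l r₀ : ℝ}

lemma mul_integral_norm_le_integral_rho_mul_norm (hw : Continuous w) (hl : 0 < l)
    (hbr : 2 / l ≤ r₀) (θ : ℝ) :
    l * ∫ r in l⁻¹..2 / l, ‖w (r • unitVec θ)‖
      ≤ ∫ r in l⁻¹..r₀, 5 * rho l (r • unitVec θ) * ‖w (r • unitVec θ)‖ := by
  have hab : l⁻¹ ≤ 2 / l := by rw [div_eq_mul_inv]; linarith [inv_pos.2 hl]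
  have hρw : Continuous fun r : ℝ => 5 * rho l (r • unitVec θ) * ‖w (r • unitVec θ)‖ := by
    fun_prop
  rw [← intervalIntegral.integral_const_mul]
  calc ∫ r in l⁻¹..2 / l, l * ‖w (r • unitVec θ)‖
      ≤ ∫ r in l⁻¹..2 / l, 5 * rho l (r • unitVec θ) * ‖w (r • unitVec θ)‖ := by
        refine intervalIntegral.integral_mono_on hab
          (Continuous.intervalIntegrable (by fun_prop) _ _) (hρw.intervalIntegrable _ _)
          fun r hr => mul_le_mul_of_nonneg_right ?_ (norm_nonneg _)
        have hr0 : 0 ≤ r := (inv_pos.2 hl).le.trans hr.1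
        have := div_five_le_rho hl (x := r • unitVec θ)
          (by rw [norm_smul_unitVec, abs_of_nonneg hr0]; exact hr.2)
        linarith
    _ ≤ ∫ r in l⁻¹..r₀, 5 * rho l (r • unitVec θ) * ‖w (r • unitVec θ)‖ :=
        intervalIntegral.integral_mono_interval le_rfl hab hbr
          (Filter.Eventually.of_forall fun r =>
            mul_nonneg (mul_nonneg (by norm_num) (rho_nonneg hl.le _)) (norm_nonneg _))
          (hρw.intervalIntegrable _ _)

lemma norm_le_integral_radialControl (hw : ContDiff ℝ 1 w) (hl : 0 < l) (hlr : 2 ≤ l * r₀)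
    (θ : ℝ) : ‖w (r₀ • unitVec θ)‖ ≤ ∫ r in l⁻¹..r₀, radialControl l w (r, θ) := by
  have hab : l⁻¹ < 2 / l := by rw [div_eq_mul_inv]; linarith [inv_pos.2 hl]
  have hbr : 2 / l ≤ r₀ := by rwa [div_le_iff₀' hl]
  have hρw : Continuous fun r : ℝ => 5 * rho l (r • unitVec θ) * ‖w (r • unitVec θ)‖ := by
    have := hw.continuous
    fun_prop
  have hDw : Continuous fun r : ℝ => fderiv ℝ w (r • unitVec θ) (unitVec θ) := by
    have := hw.continuous_fderiv one_ne_zero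
    fun_prop
  have hradial := norm_le_inv_mul_integral_norm_add_integral_norm_deriv
    (fun r => hasDerivAt_comp_smul (unitVec θ) (hw.differentiable one_ne_zero _)) hDw hab hbr
  rw [show (2 / l - l⁻¹)⁻¹ = l by field_simp; ring] at hradial
  have hweight := mul_integral_norm_le_integral_rho_mul_norm hw.continuous hl hbr θ
  calc ‖w (r₀ • unitVec θ)‖
      ≤ l * (∫ r in l⁻¹..2 / l, ‖w (r • unitVec θ)‖)
        + ∫ r in l⁻¹..r₀, ‖fderiv ℝ w (r • unitVec θ) (unitVec θ)‖ := hradial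
    _ ≤ (∫ r in l⁻¹..r₀, 5 * rho l (r • unitVec θ) * ‖w (r • unitVec θ)‖)
        + ∫ r in l⁻¹..r₀, ‖fderiv ℝ w (r • unitVec θ) (unitVec θ)‖ := by gcongr
    _ = ∫ r in l⁻¹..r₀, radialControl l w (r, θ) :=
        (intervalIntegral.integral_add (hρw.intervalIntegrable _ _)
          (hDw.norm.intervalIntegrable _ _)).symm

lemma norm_integral_circle_le_setIntegral_radialControl (hw : ContDiff ℝ 1 w) (hl : 0 < l)
    (hlr : 2 ≤ l * r₀) :
    ‖∫ θ in (-π)..π, w (r₀ • unitVec θ)‖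
      ≤ ∫ p in Ioo l⁻¹ r₀ ×ˢ Ioo (-π) π, radialControl l w p := by
  have hpi : -π ≤ π := by linarith [pi_pos]
  have hlr₀ : l⁻¹ ≤ r₀ := by
    rw [inv_le_iff_one_le_mul₀' hl]
    linarith
  have hG := continuous_radialControl hw l
  rw [← intervalIntegral_intervalIntegral_eq_setIntegral_prod hG hlr₀ hpi]
  refine intervalIntegral.norm_integral_le_of_norm_le hpi
    (Filter.Eventually.of_forall fun θ _ => norm_le_integral_radialControl hw hl hlr θ) ?_
  refine Continuous.intervalIntegrable ?_ _ _
  exact intervalIntegral.continuous_parametric_intervalIntegral_of_continuous'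
    (f := fun θ r => radialControl l w (r, θ)) (hG.comp continuous_swap) _ _

lemma setIntegral_mul_sq_radialControl_le (hw : ContDiff ℝ 1 w) (hl : 0 < l) :
    ∫ p in Ioo l⁻¹ r₀ ×ˢ Ioo (-π) π, p.1 * radialControl l w p ^ 2
      ≤ 50 * ∫ x in Metric.ball (0 : E2) r₀, energyDensity l w x := by
  have hF : Continuous fun p : ℝ × ℝ => 50 * (p.1 • energyDensity l w (p.1 • unitVec p.2)) := by
    have := continuous_energyDensity hw l
    fun_prop
  have hG : Continuous fun p : ℝ × ℝ => p.1 * radialControl l w p ^ 2 := by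
    have := continuous_radialControl hw l
    fun_prop
  rw [setIntegral_ball_eq_polar, ← integral_const_mul]
  calc ∫ p in Ioo l⁻¹ r₀ ×ˢ Ioo (-π) π, p.1 * radialControl l w p ^ 2
      ≤ ∫ p in Ioo l⁻¹ r₀ ×ˢ Ioo (-π) π, 50 * (p.1 • energyDensity l w (p.1 • unitVec p.2)) := by
        refine setIntegral_mono_on (integrableOn_Ioo_prod_Ioo hG.continuousOn)
          (integrableOn_Ioo_prod_Ioo hF.continuousOn) (measurableSet_Ioo.prod measurableSet_Ioo)
          fun p hp => ?_
        have hp0 : 0 ≤ p.1 := (inv_pos.2 hl).le.trans hp.1.1.le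
        rw [smul_eq_mul, mul_left_comm]
        exact mul_le_mul_of_nonneg_left (radialControl_sq_le l p) hp0
    _ ≤ ∫ p in Ioo 0 r₀ ×ˢ Ioo (-π) π, 50 * (p.1 • energyDensity l w (p.1 • unitVec p.2)) := by
        refine setIntegral_mono_set (integrableOn_Ioo_prod_Ioo hF.continuousOn) ?_
          (prod_mono (Ioo_subset_Ioo_left (inv_pos.2 hl).le) subset_rfl).eventuallyLE
        refine (ae_restrict_iff' (measurableSet_Ioo.prod measurableSet_Ioo)).2
          (ae_of_all _ fun p hp => ?_)
        have := energyDensity_nonneg (w := w) l (p.1 • unitVec p.2)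
        have := hp.1.1
        positivity

lemma setIntegral_radialControl_le (hw : ContDiff ℝ 1 w) (hl : 0 < l) (hlr : 2 ≤ l * r₀) :
    ∫ p in Ioo l⁻¹ r₀ ×ˢ Ioo (-π) π, radialControl l w p
      ≤ √(2 * π * log (r₀ * l)) * √(50 * ∫ x in Metric.ball (0 : E2) r₀, energyDensity l w x) := by
  have hlr₀ : l⁻¹ ≤ r₀ := by
    rw [inv_le_iff_one_le_mul₀' hl]
    linarith
  have hcs := setIntegral_Ioo_prod_Ioo_le_sqrt_mul_sqrt (continuous_radialControl hw l)
    (c := -π) (d := π) (fun p _ => radialControl_nonneg hl.le p) (inv_pos.2 hl) hlr₀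
    (by linarith [pi_pos])
  rw [div_inv_eq_mul, show π - -π = 2 * π by ring] at hcs
  exact hcs.trans (by gcongr; exact setIntegral_mul_sq_radialControl_le hw hl)

lemma circAvg_eq (R : ℝ) :
    circAvg w R = (2 * π)⁻¹ • ∫ θ in (-π)..π, w (R • unitVec θ) := by
  have hper : Function.Periodic (fun θ => w (R • unitVec θ)) (2 * π) := fun θ => by
    simp only [unitVec_periodic θ]
  have hshift := hper.intervalIntegral_add_eq 0 (-π)
  rw [zero_add, show -π + 2 * π = π by ring] at hshift
  simp only [circAvg, ← smul_unitVec, hshift]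

theorem norm_circAvg_le (hw : ContDiff ℝ 1 w) (hl : 0 < l) (hlr : 2 ≤ l * r₀) :
    ‖circAvg w r₀‖ ≤ (2 * π)⁻¹ * √(2 * π * log (r₀ * l))
      * √(50 * ∫ x in Metric.ball (0 : E2) r₀, energyDensity l w x) := by
  rw [circAvg_eq, norm_smul, Real.norm_of_nonneg (by positivity), mul_assoc]
  gcongr
  exact (norm_integral_circle_le_setIntegral_radialControl hw hl hlr).trans
    (setIntegral_radialControl_le hw hl hlr)

end

lemma log_mul_le_mul_log {r l : ℝ} (hr : 0 < r) (hl : 2 ≤ l) :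
    log (r * l) ≤ (1 + |log r| / log 2) * log l := by
  have hlog2 : 0 < log 2 := log_pos one_lt_two
  have hlogl : log 2 ≤ log l := log_le_log two_pos hl
  have hratio : |log r| ≤ |log r| / log 2 * log l := by
    rw [div_mul_eq_mul_div, le_div_iff₀ hlog2]
    exact mul_le_mul_of_nonneg_left hlogl (abs_nonneg _)
  rw [log_mul hr.ne' (by linarith), add_mul, one_mul]
  linarith [le_abs_self (log r)]

/-- For every `r₀ > 0` and `n ∈ ℕ` there is `C > 0` so that for every `λ ≥ max(2, 2/r₀)` and
every `C¹` map `w : ℝ² → ℝⁿ`: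
`|(2π)⁻¹∫₀^{2π} w(r₀cos θ, r₀sin θ)dθ| ≤ C (log λ)^{1/2} (∫_{𝔻_{r₀}} |Dw|² + ρ_λ²|w|² dx)^{1/2}`. -/
theorem stmt10 :
    ∀ r₀ : ℝ, 0 < r₀ → ∀ n : ℕ, ∃ C : ℝ, 0 < C ∧ ∀ l : ℝ, max 2 (2 / r₀) ≤ l →
      ∀ w : E2 → EuclideanSpace ℝ (Fin n), ContDiff ℝ 1 w →
        ‖circAvg w r₀‖ ≤
          C * Real.sqrt (Real.log l) *
            Real.sqrt (∫ x in Metric.ball (0 : E2) r₀,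
              (hsNormSq w x + rho l x ^ 2 * ‖w x‖ ^ 2)) := by
  intro r₀ hr₀ n
  refine ⟨(2 * π)⁻¹ * √(2 * π * (1 + |log r₀| / log 2)) * √50, by positivity, ?_⟩
  intro l hl w hw
  have hl2 : 2 ≤ l := le_of_max_le_left hl
  have hlr : 2 ≤ l * r₀ := (div_le_iff₀ hr₀).1 (le_of_max_le_right hl)
  calc ‖circAvg w r₀‖
      ≤ (2 * π)⁻¹ * √(2 * π * log (r₀ * l))
        * √(50 * ∫ x in Metric.ball (0 : E2) r₀, energyDensity l w x) :=
        norm_circAvg_le hw (by linarith) hlr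
    _ ≤ (2 * π)⁻¹ * √(2 * π * (1 + |log r₀| / log 2) * log l)
        * √(50 * ∫ x in Metric.ball (0 : E2) r₀, energyDensity l w x) := by
        rw [mul_assoc (2 * π)]
        gcongr
        exact log_mul_le_mul_log hr₀ hl2
    _ = _ := by
        rw [Real.sqrt_mul (x := 2 * π * (1 + |log r₀| / log 2)) (by positivity),
          Real.sqrt_mul (show (0 : ℝ) ≤ 50 by norm_num)]
        unfold energyDensity
        ring
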